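/- Let H be a finite nonempty set of hypotheses on a finite nonempty example set X, let P be a probability distribution on X with P(x) > 0 for all x, and let q : H → ℝ be nonnegative with Σ_{h ∈ H} q(h) = 1. Define E'(h₁,h₂) = 1 if h₁ = h₂, and E'(h₁,h₂) = Σ_{x ∈ D(h₁,h₂)} (|{h' ∈ H : h'(x) ≠ h₂(x)}|/|H|)·(P(x)/P(D(h₁,h₂))) otherwise. Then Σ_{h₁ ∈ H} Σ_{h₂ ∈ H} q(h₁)·q(h₂)·E'(h₁,h₂) ≥ 1/2; that is, when both the learner's hypothesis and the target are drawn from q, the expected fraction of hypotheses eliminated in one round is at least one half. -/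

import Mathlib

/-!
At every `x ∈ D(h₁, h₂)` no hypothesis agrees with both `h₁` and `h₂`, so the
fractions eliminated at `x` against `h₂` and against `h₁` sum to at least one.
Averaging over `x` with weights `P x / P(D)` gives `E'(h₁, h₂) + E'(h₂, h₁) ≥ 1`, and
symmetrizing the double sum over `q ⊗ q` turns this into the bound `1/2`.
-/

open Finset

/-- The paper's `E'(h₁, h₂)`. -/
noncomputable def expectedEliminationFraction {X β : Type*} [Fintype X] [DecidableEq β]
    (H : Finset (X → β)) (P : X → ℝ) (h₁ h₂ : X → β) : ℝ :=
  if h₁ = h₂ then 1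
  else ∑ x ∈ univ.filter (fun x => h₁ x ≠ h₂ x),
      ((#(H.filter (fun h' => h' x ≠ h₂ x)) : ℝ) / #H) *
        (P x / ∑ y ∈ univ.filter (fun y => h₁ y ≠ h₂ y), P y)

theorem half_le_sum_sum_mul_of_one_le_add_swap {α : Type*} (s : Finset α) (q : α → ℝ)
    (hq : ∀ a ∈ s, 0 ≤ q a) (hqsum : ∑ a ∈ s, q a = 1) (f : α → α → ℝ)
    (hf : ∀ a ∈ s, ∀ b ∈ s, 1 ≤ f a b + f b a) :
    1 / 2 ≤ ∑ a ∈ s, ∑ b ∈ s, q a * q b * f a b := by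
  have hswap : ∑ a ∈ s, ∑ b ∈ s, q a * q b * f b a = ∑ a ∈ s, ∑ b ∈ s, q a * q b * f a b := by
    rw [sum_comm]
    exact sum_congr rfl fun a _ => sum_congr rfl fun b _ => by ring
  have : 1 ≤ 2 * ∑ a ∈ s, ∑ b ∈ s, q a * q b * f a b :=
    calc (1 : ℝ) = ∑ a ∈ s, ∑ b ∈ s, q a * q b := by rw [← sum_mul_sum, hqsum, one_mul]
      _ ≤ ∑ a ∈ s, ∑ b ∈ s, q a * q b * (f a b + f b a) :=
        sum_le_sum fun a ha => sum_le_sum fun b hb =>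
          le_mul_of_one_le_right (mul_nonneg (hq a ha) (hq b hb)) (hf a ha b hb)
      _ = 2 * ∑ a ∈ s, ∑ b ∈ s, q a * q b * f a b := by
        simp only [mul_add, sum_add_distrib, hswap]
        ring
  linarith

theorem Finset.card_le_card_filter_ne_add_card_filter_ne {α β : Type*} [DecidableEq β]
    (s : Finset α) (f : α → β) {b₁ b₂ : β} (hb : b₁ ≠ b₂) :
    #s ≤ #(s.filter (f · ≠ b₁)) + #(s.filter (f · ≠ b₂)) := by
  classical
  refine (card_le_card fun a ha => ?_).trans (card_union_le _ _)
  by_cases h : f a = b₁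
  · exact mem_union_right _ (mem_filter.2 ⟨ha, h ▸ hb⟩)
  · exact mem_union_left _ (mem_filter.2 ⟨ha, h⟩)

theorem Finset.le_sum_mul_div_sum {ι : Type*} {D : Finset ι} (hD : D.Nonempty) {w : ι → ℝ}
    (hw : ∀ i ∈ D, 0 < w i) {c : ℝ} {g : ι → ℝ} (hg : ∀ i ∈ D, c ≤ g i) :
    c ≤ ∑ i ∈ D, g i * (w i / ∑ j ∈ D, w j) := by
  have hW : 0 < ∑ j ∈ D, w j := sum_pos hw hD
  calc c = ∑ i ∈ D, c * (w i / ∑ j ∈ D, w j) := by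
        rw [← mul_sum, ← sum_div, div_self hW.ne', mul_one]
    _ ≤ ∑ i ∈ D, g i * (w i / ∑ j ∈ D, w j) :=
        sum_le_sum fun i hi => mul_le_mul_of_nonneg_right (hg i hi) (div_pos (hw i hi) hW).le

theorem one_le_expectedEliminationFraction_add_swap {X β : Type*} [Fintype X] [DecidableEq β]
    {H : Finset (X → β)} (hH : H.Nonempty) {P : X → ℝ} (hP : ∀ x, 0 < P x) (h₁ h₂ : X → β) :
    1 ≤ expectedEliminationFraction H P h₁ h₂ + expectedEliminationFraction H P h₂ h₁ := by
  by_cases h : h₁ = h₂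
  · simp [expectedEliminationFraction, h]
  have hD : univ.filter (fun x => h₂ x ≠ h₁ x) = univ.filter (fun x => h₁ x ≠ h₂ x) :=
    filter_congr fun x _ => ne_comm
  have hDne : (univ.filter (fun x => h₁ x ≠ h₂ x)).Nonempty := by
    obtain ⟨x, hx⟩ := Function.ne_iff.1 h
    exact ⟨x, mem_filter.2 ⟨mem_univ x, hx⟩⟩
  have hHpos : (0 : ℝ) < #H := by exact_mod_cast hH.card_pos
  rw [expectedEliminationFraction, expectedEliminationFraction, if_neg h, if_neg (Ne.symm h), hD,
    ← sum_add_distrib]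
  simp_rw [← add_mul]
  refine le_sum_mul_div_sum hDne (fun x _ => hP x) fun x hx => ?_
  rw [← add_div, one_le_div hHpos, add_comm]
  exact_mod_cast H.card_le_card_filter_ne_add_card_filter_ne (· x) (mem_filter.1 hx).2

theorem randomized_expected_elimination_half_general
    {X : Type*} [Fintype X]
    (H : Finset (X → ℕ)) (hH : H.Nonempty)
    (P : X → ℝ)
    (hPpos : ∀ x, 0 < P x)
    (q : (X → ℕ) → ℝ)
    (hqnonneg : ∀ h ∈ H, 0 ≤ q h)
    (hqsum : ∑ h ∈ H, q h = 1) :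
    (1 : ℝ) / 2 ≤
      ∑ h₁ ∈ H, ∑ h₂ ∈ H, q h₁ * q h₂ *
        (if h₁ = h₂ then (1 : ℝ)
         else ∑ x ∈ univ.filter (fun x => h₁ x ≠ h₂ x),
            (((H.filter (fun h' => h' x ≠ h₂ x)).card : ℝ) / (H.card : ℝ)) *
              (P x / ∑ y ∈ univ.filter (fun y => h₁ y ≠ h₂ y), P y)) :=
  half_le_sum_sum_mul_of_one_le_add_swap H q hqnonneg hqsum (expectedEliminationFraction H P)
    fun h₁ _ h₂ _ => one_le_expectedEliminationFraction_add_swap hH hPpos h₁ h₂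

/-- **Lemma 5 (Randomized algorithm).** When both the learner's hypothesis and the target
are drawn from the same distribution `q` on `H`, the expected fraction of hypotheses
eliminated in one round is at least `1/2`. Here `E'(h₁,h₂) = 1` if `h₁ = h₂`, and otherwise
`E'(h₁,h₂) = ∑_{x ∈ D(h₁,h₂)} (|{h' ∈ H : h' x ≠ h₂ x}|/|H|) · (P x / P (D(h₁,h₂)))`. -/
theorem randomized_expected_elimination_half
    {X : Type*} [Fintype X] [Nonempty X] [DecidableEq X]
    (H : Finset (X → ℕ)) (hH : H.Nonempty)
    (P : X → ℝ)
    (hPpos : ∀ x, 0 < P x)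
    (hPsum : ∑ x, P x = 1)
    (q : (X → ℕ) → ℝ)
    (hqnonneg : ∀ h ∈ H, 0 ≤ q h)
    (hqsum : ∑ h ∈ H, q h = 1) :
    (1 : ℝ) / 2 ≤
      ∑ h₁ ∈ H, ∑ h₂ ∈ H, q h₁ * q h₂ *
        (if h₁ = h₂ then (1 : ℝ)
         else ∑ x ∈ univ.filter (fun x => h₁ x ≠ h₂ x),
            (((H.filter (fun h' => h' x ≠ h₂ x)).card : ℝ) / (H.card : ℝ)) *
              (P x / ∑ y ∈ univ.filter (fun y => h₁ y ≠ h₂ y), P y)) :=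
  randomized_expected_elimination_half_general H hH P hPpos q hqnonneg hqsum
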